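/- Under the linear separability assumption with margin γ, if s_T ∈ ℝ^d satisfies ‖s_T‖_2 ≥ T(T+1)γ/8 and for w̄ = 8 s_T/(T(T+1)) the duality gap bound m(w) - m(w̄) ≤ (8 log n + 2)/(T(T+1)) holds for all w ∈ ℝ^d (where m(w) = min_{p∈Δ^n} p^T A w - ½‖w‖_2²), then the normalized margin satisfies min_{p∈Δ^n} p^T A s_T / ‖s_T‖_2 ≥ γ - (8 log n + 2)/(T(T+1)γ). -/

import Mathlib

open Pointwise


/-- `m(w) = min_{p ∈ Δⁿ} pᵀ A w - ½‖w‖₂²`. -/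
noncomputable def mval {n d : ℕ} (A : Matrix (Fin n) (Fin d) ℝ) (w : Fin d → ℝ) : ℝ :=
  sInf ((fun p : Fin n → ℝ => ∑ i, p i * A.mulVec w i) '' stdSimplex ℝ (Fin n))
    - (1 / 2) * ∑ j, (w j) ^ 2

lemma sInf_image_mul_left (a : ℝ) (ha : 0 ≤ a) (S : Set ℝ) :
    sInf ((fun x => a * x) '' S) = a * sInf S := by
  have h : (fun x => a * x) '' S = a • S := by
    ext x; simp [Set.mem_smul_set, smul_eq_mul, eq_comm]
  rw [h, Real.sInf_smul_of_nonneg ha, smul_eq_mul]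

lemma sum_mulVec_smul {n d : ℕ} (A : Matrix (Fin n) (Fin d) ℝ) (a : ℝ) (w : Fin d → ℝ)
    (p : Fin n → ℝ) :
    ∑ i, p i * A.mulVec (a • w) i = a * ∑ i, p i * A.mulVec w i := by
  rw [Matrix.mulVec_smul, Finset.mul_sum]
  refine Finset.sum_congr rfl fun i _ => ?_
  simp [smul_eq_mul]; ring

lemma mval_smul {n d : ℕ} (A : Matrix (Fin n) (Fin d) ℝ) (a : ℝ) (ha : 0 ≤ a)
    (w : Fin d → ℝ) :
    mval A (a • w) = a * sInf ((fun p : Fin n → ℝ => ∑ i, p i * A.mulVec w i) ''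
      stdSimplex ℝ (Fin n)) - (1 / 2) * a ^ 2 * ∑ j, (w j) ^ 2 := by
  unfold mval
  have h1 : (fun p : Fin n → ℝ => ∑ i, p i * A.mulVec (a • w) i)
      = (fun x => a * x) ∘ (fun p : Fin n → ℝ => ∑ i, p i * A.mulVec w i) :=
    funext fun p => sum_mulVec_smul A a w p
  rw [h1, Set.image_comp, sInf_image_mul_left a ha]
  have h2 : ∑ j, ((a • w) j) ^ 2 = a ^ 2 * ∑ j, (w j) ^ 2 := by
    rw [Finset.mul_sum]
    refine Finset.sum_congr rfl fun j _ => ?_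
    simp [smul_eq_mul]; ring
  rw [h2]; ring

set_option maxHeartbeats 1600000 in
/-- Implicit bias of NAG: if `‖s_T‖₂ ≥ T(T+1)γ/8` and the duality-gap bound
`m(w) - m(w̄) ≤ (8 log n + 2)/(T(T+1))` holds for all `w` with
`w̄ = (8/(T(T+1))) • s_T`, then under separability with unit margin-`γ` classifier
`w*`, the normalized margin of `s_T` is at least `γ - (8 log n + 2)/(T(T+1)γ)`. -/
theorem nag_normalized_margin {n d T : ℕ} [NeZero n] (hT : 1 ≤ T)
    (A : Matrix (Fin n) (Fin d) ℝ)
    (hA : ∀ i, Real.sqrt (∑ j, (A i j) ^ 2) ≤ 1)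
    (γ : ℝ) (hγ : 0 < γ)
    (wstar : Fin d → ℝ)
    (hnorm : Real.sqrt (∑ j, (wstar j) ^ 2) = 1)
    (hmargin : ∀ q ∈ stdSimplex ℝ (Fin n), γ ≤ ∑ i, q i * A.mulVec wstar i)
    (s : Fin d → ℝ)
    (hslb : (T : ℝ) * (T + 1) * γ / 8 ≤ Real.sqrt (∑ j, (s j) ^ 2))
    (hgap : ∀ w : Fin d → ℝ,
      mval A w - mval A ((8 / ((T : ℝ) * (T + 1))) • s) ≤
        (8 * Real.log n + 2) / ((T : ℝ) * (T + 1))) :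
    γ - (8 * Real.log n + 2) / ((T : ℝ) * (T + 1) * γ) ≤
      sInf ((fun p : Fin n → ℝ => ∑ i, p i * A.mulVec s i) '' stdSimplex ℝ (Fin n))
        / Real.sqrt (∑ j, (s j) ^ 2) := by
  classical
  have hT1 : (1:ℝ) ≤ (T:ℝ) := by exact_mod_cast hT
  have hTpos : (0:ℝ) < (T:ℝ) * ((T:ℝ) + 1) := by nlinarith
  set c : ℝ := 8 / ((T:ℝ) * ((T:ℝ) + 1)) with hc
  have hcpos : 0 < c := by positivity
  set N : ℝ := Real.sqrt (∑ j, (s j) ^ 2) with hNdef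
  have hsum_nonneg : 0 ≤ ∑ j, (s j) ^ 2 := Finset.sum_nonneg fun j _ => sq_nonneg _
  have hN2 : N ^ 2 = ∑ j, (s j) ^ 2 := Real.sq_sqrt hsum_nonneg
  have hNpos : 0 < N := lt_of_lt_of_le (by positivity) hslb
  have hwsum : ∑ j, (wstar j) ^ 2 = 1 := by
    have h0 : 0 ≤ ∑ j, (wstar j) ^ 2 := Finset.sum_nonneg fun j _ => sq_nonneg _
    nlinarith [Real.sq_sqrt h0, hnorm]
  have hn1 : (1:ℝ) ≤ (n:ℝ) := by
    exact_mod_cast Nat.one_le_iff_ne_zero.2 (NeZero.ne n)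
  have hεnn : 0 ≤ (8 * Real.log n + 2) / ((T : ℝ) * ((T:ℝ) + 1)) := by
    have := Real.log_nonneg hn1
    positivity
  set ε : ℝ := (8 * Real.log n + 2) / ((T : ℝ) * ((T:ℝ) + 1)) with hεdef
  -- the simplex is nonempty
  have hp0 : (fun _ : Fin n => (n:ℝ)⁻¹) ∈ stdSimplex ℝ (Fin n) := by
    constructor
    · intro i; positivity
    · have hn0 : (n:ℝ) ≠ 0 := by positivity
      simp [Finset.sum_const, Finset.card_univ]
  set Sstar : Set ℝ :=
    (fun p : Fin n → ℝ => ∑ i, p i * A.mulVec wstar i) '' stdSimplex ℝ (Fin n) with hSstar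
  set S : Set ℝ :=
    (fun p : Fin n → ℝ => ∑ i, p i * A.mulVec s i) '' stdSimplex ℝ (Fin n) with hS
  have hMstar : γ ≤ sInf Sstar := by
    refine le_csInf ⟨_, ⟨_, hp0, rfl⟩⟩ ?_
    rintro x ⟨q, hq, rfl⟩
    exact hmargin q hq
  set α : ℝ := c * N with hα
  have hαnn : 0 ≤ α := le_of_lt (mul_pos hcpos hNpos)
  have hγα : γ ≤ α := by
    have : c * ((T:ℝ) * ((T:ℝ) + 1) * γ / 8) = γ := by
      field_simp [hc]
      have h8 : c * ((T:ℝ) * ((T:ℝ) + 1)) = 8 := by rw [hc]; exact div_mul_cancel₀ _ hTpos.ne'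
      linear_combination h8
    calc γ = c * ((T:ℝ) * ((T:ℝ) + 1) * γ / 8) := this.symm
      _ ≤ c * N := by
        exact mul_le_mul_of_nonneg_left hslb (le_of_lt hcpos)
  have hm1 : α * γ - (1/2) * α ^ 2 ≤ mval A (α • wstar) := by
    rw [mval_smul A α hαnn wstar, hwsum]
    have := mul_le_mul_of_nonneg_left hMstar hαnn
    nlinarith
  have hm2 : mval A (c • s) = c * sInf S - (1/2) * c ^ 2 * N ^ 2 := by
    rw [mval_smul A c (le_of_lt hcpos) s, hN2]
  have hkey : c * N * γ - c * sInf S ≤ ε := by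
    have h := hgap (α • wstar)
    rw [hm2] at h
    have hα2 : α ^ 2 = c ^ 2 * N ^ 2 := by rw [hα]; ring
    nlinarith [hm1]
  -- final algebra
  have hrw : (8 * Real.log n + 2) / ((T : ℝ) * ((T:ℝ) + 1) * γ) = ε / γ := by
    rw [hεdef, div_div]
  rw [show ((T : ℝ) * (↑T + 1) * γ) = ((T : ℝ) * ((T:ℝ) + 1) * γ) from rfl, hrw,
    le_div_iff₀ hNpos]
  set q : ℝ := ε / γ with hq
  have hqγ : ε = q * γ := by rw [hq]; exact (div_mul_cancel₀ _ hγ.ne').symm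
  have hqnn : 0 ≤ q := div_nonneg hεnn (le_of_lt hγ)
  have h2 : q * γ ≤ q * (c * N) := mul_le_mul_of_nonneg_left hγα hqnn
  nlinarith [hkey, h2, hcpos, hNpos]
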